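/- Let A be a commutative ring and B an A-algebra that is free of rank n + 1 as an A-module, with n ≥ 1, admitting an A-basis {1, b₁, …, bₙ}. Let E = B/(A·1) be the quotient A-module (which is free with basis the images of b₁, …, bₙ). Then the B-module homomorphism c_B : Hom_A(E, A) ⊗_A B → Hom_A(B, A), defined by c_B(f ⊗ b)(x) = f̃(bx) where f̃ : B → A is the composition of the quotient map B → E with f, is surjective. Here Hom_A(B, A) carries the B-module structure (b·φ)(x) = φ(bx). -/

import Mathlib

/-- Surjectivity of the natural map `Hom_A(E, A) ⊗_A B → Hom_A(B, A)`,
`f ⊗ b ↦ (x ↦ f̃(b x))`, where `E = B / (A·1)` and `f̃` is the composition of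
the quotient map `B → E` with `f`. Surjectivity is expressed by saying that
every `A`-linear functional on `B` is a finite sum of images of pure tensors. -/
theorem stmt_12 (A B : Type*) [CommRing A] [CommRing B] [Algebra A B]
    (n : ℕ) (hn : 1 ≤ n) (β : Module.Basis (Fin (n + 1)) A B) (hβ0 : β 0 = 1)
    (φ : B →ₗ[A] A) :
    ∃ (k : ℕ) (f : Fin k → ((B ⧸ Submodule.span A ({1} : Set B)) →ₗ[A] A))
      (c : Fin k → B),
      ∀ x : B, φ x = ∑ i, f i ((Submodule.span A ({1} : Set B)).mkQ (c i * x)) := by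
  have hne : (1 : Fin (n+1)) ≠ 0 := by
    intro h
    have h2 := congrArg Fin.val h
    rw [Fin.val_one', Fin.val_zero, Nat.mod_eq_of_lt (by omega)] at h2
    omega
  have hc1 : ∀ i : Fin (n+1), i ≠ 0 → β.coord i 1 = 0 := by
    intro i hi
    rw [← hβ0, Module.Basis.coord_apply, Module.Basis.repr_self, Finsupp.single_apply]
    simp [Ne.symm hi]
  set ψ : Fin (n+1) → (B →ₗ[A] A) := fun i =>
    if i = 0 then φ (β 0) • β.coord 1
    else (φ (β i) - φ (β 0) * β.coord 1 (β 1 * β i)) • β.coord i with hψ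
  set c : Fin (n+1) → B := fun i => if i = 0 then β 1 else 1 with hc
  have hψ1 : ∀ i, ψ i 1 = 0 := by
    intro i
    by_cases hi : i = 0
    · simp [hψ, hi, hc1 _ hne]
    · simp [hψ, hi, hc1 _ hi]
  refine ⟨n+1, fun i => Submodule.liftQ _ (ψ i) (by
    rw [Submodule.span_le]
    intro y hy
    simp only [Set.mem_singleton_iff] at hy
    subst hy
    simpa using hψ1 i), c, ?_⟩
  have hL : φ = ∑ i, (ψ i).comp (LinearMap.mulLeft A (c i)) := by
    apply β.ext
    intro j
    simp only [LinearMap.sum_apply, LinearMap.comp_apply, LinearMap.mulLeft_apply]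
    rw [Fin.sum_univ_succ]
    have hcd : ∀ i j : Fin (n+1), β.coord i (β j) = if j = i then 1 else 0 := by
      intro i j
      rw [Module.Basis.coord_apply, Module.Basis.repr_self, Finsupp.single_apply]
    by_cases hj : j = 0
    · subst hj
      have : ∀ i : Fin n, ψ i.succ (c i.succ * β 0) = 0 := by
        intro i
        simp [hψ, hc, Fin.succ_ne_zero, hcd, (Fin.succ_ne_zero i).symm]
      rw [Finset.sum_congr rfl (fun i _ => this i)]
      simp [hψ, hc, hβ0, hcd, Ne.symm hne]
    · obtain ⟨j0, rfl⟩ := Fin.exists_succ_eq.mpr hj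
      have : ∀ i : Fin n, ψ i.succ (c i.succ * β j0.succ)
          = if i = j0 then φ (β j0.succ) - φ (β 0) * β.coord 1 (β 1 * β j0.succ) else 0 := by
        intro i
        by_cases hij : i = j0
        · subst hij; simp [hψ, hc, Fin.succ_ne_zero, hcd]
        · have : j0.succ ≠ i.succ := fun h => hij (Fin.succ_injective _ h).symm
          simp [hψ, hc, Fin.succ_ne_zero, hcd, this, hij]
      rw [Finset.sum_congr rfl (fun i _ => this i), Finset.sum_ite_eq' Finset.univ j0]
      simp [hψ, hc]
  intro x
  have := LinearMap.congr_fun hL x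
  simpa [Submodule.liftQ_apply, LinearMap.sum_apply, LinearMap.comp_apply,
    LinearMap.mulLeft_apply] using this
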